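/- Let p be a prime, n and m positive integers, and let k_1, …, k_m be nonnegative integers each less than n (with k_1 + … + k_m < n). The function u_{k_1,…,k_m} : (Z_{p^n})^m → Z_{p^n} defined by u_{k_1,…,k_m}(x_1,…,x_m) = x_1^{k_1}·…·x_m^{k_m} if p divides x_i for every i = 1,…,m, and u_{k_1,…,k_m}(x_1,…,x_m) = 0 if p does not divide x_i for at least one i, is a polynomial function in m variables; that is, there exists a polynomial g in Z_{p^n}[x_1,…,x_m] whose evaluation at every point of (Z_{p^n})^m equals u_{k_1,…,k_m}. -/

import Mathlib

/-! For `E = n φ(p ^ n)`, the power map `x ↦ x ^ E` on `ZMod (p ^ n)` is the indicator of the units: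
multiples of `p` are nilpotent of index at most `n`, and every other residue is a unit, hence killed
by `φ(p ^ n)` (Euler). So `1 - X ^ E` evaluates to `1` on multiples of `p` and to `0` elsewhere, and
`∏ i, X i ^ k i * (1 - X i ^ E)` is the required polynomial. -/

open scoped Nat

namespace ZMod

variable {p : ℕ} (n : ℕ)

lemma pow_eq_zero_of_mem_span_natCast {x : ZMod (p ^ n)} (hx : x ∈ Ideal.span {(p : ZMod (p ^ n))})
    {e : ℕ} (he : n ≤ e) : x ^ e = 0 := by
  obtain ⟨c, rfl⟩ := Ideal.mem_span_singleton.mp hx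
  have hpn : (p : ZMod (p ^ n)) ^ n = 0 := by rw [← Nat.cast_pow, natCast_self]
  rw [mul_pow, ← Nat.sub_add_cancel he, pow_add, hpn, mul_zero, zero_mul]

lemma isUnit_of_notMem_span_prime (hp : p.Prime) {x : ZMod (p ^ n)}
    (hx : x ∉ Ideal.span {(p : ZMod (p ^ n))}) : IsUnit x := by
  have : NeZero (p ^ n) := ⟨(pow_pos hp.pos n).ne'⟩
  have hndvd : ¬p ∣ x.val := fun hdvd ↦ hx <| Ideal.mem_span_singleton.mpr <| by
    simpa only [natCast_zmod_val] using (Nat.cast_dvd_cast hdvd : (p : ZMod (p ^ n)) ∣ _)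
  rw [← natCast_zmod_val x, isUnit_iff_coprime]
  exact ((hp.coprime_iff_not_dvd.mpr hndvd).symm).pow_right n

lemma pow_mul_totient_eq_one_of_notMem_span_prime (hp : p.Prime) {x : ZMod (p ^ n)}
    (hx : x ∉ Ideal.span {(p : ZMod (p ^ n))}) : x ^ (n * φ (p ^ n)) = 1 := by
  obtain ⟨u, rfl⟩ := isUnit_of_notMem_span_prime n hp hx
  rw [mul_comm, pow_mul, ← Units.val_pow_eq_pow_val, pow_totient, Units.val_one, one_pow]

end ZMod

lemma MvPolynomial.eval_prod_X_pow_mul_one_sub_X_pow {R σ : Type*} [CommRing R] [Fintype σ]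
    (I : Ideal R) {e : ℕ} (h_mem : ∀ x ∈ I, x ^ e = 0) (h_notMem : ∀ x ∉ I, x ^ e = 1)
    (k : σ → ℕ) (x : σ → R) [Decidable (∀ i, x i ∈ I)] :
    eval x (∏ i, X i ^ k i * (1 - X i ^ e)) = if ∀ i, x i ∈ I then ∏ i, x i ^ k i else 0 := by
  simp only [map_prod, map_mul, map_sub, map_pow, eval_X, map_one]
  split_ifs with hx
  · exact Finset.prod_congr rfl fun i _ ↦ by rw [h_mem _ (hx i), sub_zero, mul_one]
  · obtain ⟨i, hi⟩ := not_forall.mp hx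
    exact Finset.prod_eq_zero (Finset.mem_univ i) (by rw [h_notMem _ hi, sub_self, mul_zero])

open scoped Classical in
theorem multivariate_uk_is_poly_fun_general (p n m : ℕ) (hp : p.Prime)
    (k : Fin m → ℕ) :
    ∃ g : MvPolynomial (Fin m) (ZMod (p ^ n)),
      ∀ x : Fin m → ZMod (p ^ n),
        (if ∀ i, x i ∈ Ideal.span {(p : ZMod (p ^ n))} then ∏ i, x i ^ k i else 0) =
          MvPolynomial.eval x g := by
  have hn_le : n ≤ n * φ (p ^ n) :=
    Nat.le_mul_of_pos_right n (Nat.totient_pos.mpr (pow_pos hp.pos n))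
  exact ⟨_, fun x ↦ (MvPolynomial.eval_prod_X_pow_mul_one_sub_X_pow _
    (fun _ hx ↦ ZMod.pow_eq_zero_of_mem_span_natCast n hx hn_le)
    (fun _ hx ↦ ZMod.pow_mul_totient_eq_one_of_notMem_span_prime n hp hx) k x).symm⟩

open scoped Classical in
theorem multivariate_uk_is_poly_fun (p n m : ℕ) (hp : p.Prime) (hn : 0 < n) (hm : 0 < m)
    (k : Fin m → ℕ) (hk : ∀ i, k i < n) (hksum : ∑ i, k i < n) :
    ∃ g : MvPolynomial (Fin m) (ZMod (p ^ n)),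
      ∀ x : Fin m → ZMod (p ^ n),
        (if ∀ i, x i ∈ Ideal.span {(p : ZMod (p ^ n))} then ∏ i, x i ^ k i else 0) =
          MvPolynomial.eval x g :=
  multivariate_uk_is_poly_fun_general p n m hp k
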